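/- arXiv:1705.10570 — 3 statements merged into one kernel-verified Lean document; each statement's English description precedes it below -/
import Mathlib

section
/- Let G be an almost minimally 1-tough graph on at least 4 vertices. Then G is minimally 1-tough. -/
open SimpleGraph

/-- Number of connected components after deleting vertex set `S`. -/
noncomputable def numComp {V : Type*} (G : SimpleGraph V) (S : Set V) : ℕ :=
  Nat.card (G.induce (Sᶜ : Set V)).ConnectedComponent

/-- `S` is a cutset: its removal leaves more than one component. -/
def IsCutset {V : Type*} (G : SimpleGraph V) (S : Set V) : Prop :=
  1 < numComp G S

/-- `G` is `t`-tough: every cutset `S` leaves at most `|S|/t` components.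
Equivalently `τ(G) ≥ t` (for `t > 0`). -/
def IsTTough {V : Type*} (t : ℚ) (G : SimpleGraph V) : Prop :=
  ∀ S : Set V, IsCutset G S → t * (numComp G S : ℚ) ≤ (Nat.card S : ℚ)

/-- `τ(G) = t`: `G` is `t`-tough and `t` is the largest such value. -/
def ToughnessEq {V : Type*} (G : SimpleGraph V) (t : ℚ) : Prop :=
  IsTTough t G ∧ ∀ t' : ℚ, IsTTough t' G → t' ≤ t

/-- The toughness of `G` equals `t`, characterized as the minimum of
`|S|/ω(G−S)` over cutsets `S` (valid for connected noncomplete graphs). -/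
def ToughnessMin {V : Type*} (G : SimpleGraph V) (t : ℚ) : Prop :=
  IsLeast {q : ℚ | ∃ S : Set V, IsCutset G S ∧
    q = (Nat.card S : ℚ) / (numComp G S : ℚ)} t

/-- `G` is minimally `t`-tough. -/
def MinTough {V : Type*} (t : ℚ) (G : SimpleGraph V) : Prop :=
  ToughnessEq G t ∧ ∀ e ∈ G.edgeSet, ¬ IsTTough t (G.deleteEdges {e})

/-- `G` is almost minimally 1-tough: `τ(G) ≥ 1` and `τ(G−e) < 1` for all edges. -/
def AlmostMinOneTough {V : Type*} (G : SimpleGraph V) : Prop :=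
  IsTTough 1 G ∧ ∀ e ∈ G.edgeSet, ¬ IsTTough 1 (G.deleteEdges {e})

/-- The independence number of `G`. -/
noncomputable def indepNum {V : Type*} [Fintype V] (G : SimpleGraph V) : ℕ :=
  sSup {n | ∃ s : Set V, s.Pairwise (fun x y => ¬ G.Adj x y) ∧ Nat.card s = n}

/-- `G` is α-critical: deleting any edge increases the independence number. -/
def AlphaCritical {V : Type*} [Fintype V] (G : SimpleGraph V) : Prop :=
  ∀ e ∈ G.edgeSet, _root_.indepNum G < _root_.indepNum (G.deleteEdges {e})

/-! Take an edge `uv`. As `G - uv` is not 1-tough, some `S` has `ω(G - uv - S) > |S|`.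
Toughness of `G` forces `u, v ∉ S` and `uv` to be a bridge of `G - S`; since deleting an edge
creates at most one new component, `|S| ≤ ω(G - S)`, so `S` itself witnesses `τ(G) ≤ 1` when it
is a cutset of `G`. Otherwise `G - S` is connected and `|S| ≤ 1`, so (as `|V| ≥ 4`) `G - S` has a
third vertex `w`, lying on the side of `u`, say, of the bridge. Then `S ∪ {u}` separates `w` from
`v`: a cutset of size at most `2 ≤ ω(G - S - u)`. -/

namespace SimpleGraph

section DeleteEdge

variable {W : Type*} {H : SimpleGraph W} {u v x y : W}

theorem Reachable.deleteEdges_or (h : H.Reachable x y) :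
    (H.deleteEdges {s(u, v)}).Reachable x y ∨
      (H.deleteEdges {s(u, v)}).Reachable x u ∧ (H.deleteEdges {s(u, v)}).Reachable v y ∨
      (H.deleteEdges {s(u, v)}).Reachable x v ∧ (H.deleteEdges {s(u, v)}).Reachable u y := by
  obtain ⟨p⟩ := h
  induction p with
  | nil => exact .inl .rfl
  | @cons a b c hab p ih =>
    by_cases he : s(a, b) = s(u, v)
    · rcases Sym2.eq_iff.mp he with ⟨rfl, rfl⟩ | ⟨rfl, rfl⟩
      · rcases ih with h | ⟨h, h'⟩ | ⟨h, h'⟩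
        exacts [.inr (.inl ⟨.rfl, h⟩), .inl (h.symm.trans h'), .inl h']
      · rcases ih with h | ⟨h, h'⟩ | ⟨h, h'⟩
        exacts [.inr (.inr ⟨.rfl, h⟩), .inl h', .inl (h.symm.trans h')]
    · have hab' : (H.deleteEdges {s(u, v)}).Adj a b := by simp [hab, he]
      rcases ih with h | ⟨h, h'⟩ | ⟨h, h'⟩
      exacts [.inl (hab'.reachable.trans h), .inr (.inl ⟨hab'.reachable.trans h, h'⟩),
        .inr (.inr ⟨hab'.reachable.trans h, h'⟩)]

theorem ConnectedComponent.eq_or_of_map_deleteEdges_eq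
    {c d : (H.deleteEdges {s(u, v)}).ConnectedComponent}
    (h : c.map (.ofLE (H.deleteEdges_le _)) = d.map (.ofLE (H.deleteEdges_le _))) :
    c = d ∨
      c = (H.deleteEdges {s(u, v)}).connectedComponentMk v ∧
        d = (H.deleteEdges {s(u, v)}).connectedComponentMk u ∨
      c = (H.deleteEdges {s(u, v)}).connectedComponentMk u ∧
        d = (H.deleteEdges {s(u, v)}).connectedComponentMk v := by
  induction c using ConnectedComponent.ind with | h x =>
  induction d using ConnectedComponent.ind with | h y =>
  simp only [ConnectedComponent.map_mk, ConnectedComponent.eq, Hom.ofLE_apply] at h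
  rcases h.deleteEdges_or (u := u) (v := v) with h | ⟨hx, hy⟩ | ⟨hx, hy⟩
  · exact .inl (ConnectedComponent.sound h)
  · exact .inr (.inr ⟨ConnectedComponent.sound hx, ConnectedComponent.sound hy.symm⟩)
  · exact .inr (.inl ⟨ConnectedComponent.sound hx, ConnectedComponent.sound hy.symm⟩)

theorem card_connectedComponent_deleteEdges_le [Finite W] (H : SimpleGraph W) (u v : W) :
    Nat.card (H.deleteEdges {s(u, v)}).ConnectedComponent ≤
      Nat.card H.ConnectedComponent + 1 := by
  classical
  set H' := H.deleteEdges {s(u, v)}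
  let f (c : H'.ConnectedComponent) : Option H.ConnectedComponent :=
    if c = H'.connectedComponentMk v then none else some (c.map (.ofLE (H.deleteEdges_le _)))
  have hf : f.Injective := by
    intro c d hcd
    by_cases hc : c = H'.connectedComponentMk v <;> by_cases hd : d = H'.connectedComponentMk v <;>
      simp only [f, hc, hd, if_true, if_false, reduceCtorEq, Option.some.injEq] at hcd
    · exact hc.trans hd.symm
    · rcases ConnectedComponent.eq_or_of_map_deleteEdges_eq hcd with h | ⟨h, -⟩ | ⟨-, h⟩
      exacts [h, (hc h).elim, (hd h).elim]
  simpa [Finite.card_option] using Nat.card_le_card_of_injective f hf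

theorem card_connectedComponent_deleteEdges_of_reachable [Finite W]
    (h : (H.deleteEdges {s(u, v)}).Reachable u v) :
    Nat.card (H.deleteEdges {s(u, v)}).ConnectedComponent = Nat.card H.ConnectedComponent := by
  refine Nat.card_eq_of_bijective _
    ⟨fun c d hcd => ?_, ConnectedComponent.surjective_map_ofLE (H.deleteEdges_le _)⟩
  rcases ConnectedComponent.eq_or_of_map_deleteEdges_eq hcd with h' | ⟨rfl, rfl⟩ | ⟨rfl, rfl⟩
  exacts [h', ConnectedComponent.sound h.symm, ConnectedComponent.sound h]

end DeleteEdge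

section Induce

variable {V : Type*} {G : SimpleGraph V} {S T : Set V} {u v : V}

theorem induce_compl_deleteEdges (hu : u ∉ S) (hv : v ∉ S) :
    (G.deleteEdges {s(u, v)}).induce Sᶜ =
      (G.induce Sᶜ).deleteEdges {s(⟨u, hu⟩, ⟨v, hv⟩)} := by
  ext a b
  simp only [comap_adj, Function.Embedding.coe_subtype, deleteEdges_adj, Set.mem_singleton_iff,
    Sym2.eq_iff, Subtype.ext_iff]

theorem Reachable.deleteEdges_induce_of_subset (hST : S ⊆ T) (he : u ∈ T ∨ v ∈ T)
    {x y : ↥Tᶜ} (h : (G.induce Tᶜ).Reachable x y) :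
    ((G.deleteEdges {s(u, v)}).induce Sᶜ).Reachable
      (Set.inclusion (Set.compl_subset_compl.mpr hST) x)
      (Set.inclusion (Set.compl_subset_compl.mpr hST) y) := by
  refine h.map
    { toFun := Set.inclusion (Set.compl_subset_compl.mpr hST)
      map_rel' := by
        rintro a b hab
        refine ⟨hab, ?_⟩
        simp only [fromEdgeSet_adj, Set.mem_singleton_iff, Sym2.eq_iff,
          Function.Embedding.coe_subtype, not_and]
        rintro (⟨rfl, rfl⟩ | ⟨rfl, rfl⟩) <;> rcases he with he | he
        exacts [(a.2 he).elim, (b.2 he).elim, (b.2 he).elim, (a.2 he).elim] }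

end Induce

end SimpleGraph

section Toughness

variable {V : Type*} {G : SimpleGraph V} {S : Set V} {u v : V}

theorem isCutset_iff_exists_not_reachable [Finite V] :
    IsCutset G S ↔ ∃ x y : ↥Sᶜ, ¬ (G.induce Sᶜ).Reachable x y := by
  simp only [IsCutset, numComp, Finite.one_lt_card_iff_nontrivial, nontrivial_iff, ne_eq]
  constructor
  · rintro ⟨c, d, hcd⟩
    induction c using ConnectedComponent.ind with | h x =>
    induction d using ConnectedComponent.ind with | h y =>
    exact ⟨x, y, fun h => hcd (ConnectedComponent.sound h)⟩
  · rintro ⟨x, y, hxy⟩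
    exact ⟨_, _, fun h => hxy (ConnectedComponent.exact h)⟩

theorem IsTTough.numComp_le (hG : IsTTough 1 G) (hS : IsCutset G S) :
    numComp G S ≤ Nat.card S := by
  exact_mod_cast (one_mul (numComp G S : ℚ)) ▸ hG S hS

theorem IsTTough.le_one_of_card_le_numComp {t : ℚ} (hG : IsTTough t G) (hS : IsCutset G S)
    (hle : Nat.card S ≤ numComp G S) : t ≤ 1 := by
  have hpos : (0 : ℚ) < numComp G S := by exact_mod_cast zero_lt_one.trans hS
  refine le_of_mul_le_mul_right ?_ hpos
  rw [one_mul]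
  exact (hG S hS).trans (by exact_mod_cast hle)

theorem IsTTough.exists_adj [Finite V] [Nontrivial V] (hG : IsTTough 1 G) :
    ∃ u v, G.Adj u v := by
  by_contra! hbot
  obtain ⟨x, y, hxy⟩ := exists_pair_ne V
  have hcut : IsCutset G ∅ := by
    refine isCutset_iff_exists_not_reachable.mpr ⟨⟨x, id⟩, ⟨y, id⟩, fun h => hxy ?_⟩
    have : G.induce (∅ : Set V)ᶜ = ⊥ := by ext a b; simp [hbot]
    rw [this, reachable_bot] at h
    exact congrArg Subtype.val h
  have hle := hG.numComp_le hcut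
  rw [Nat.card_of_isEmpty, IsCutset] at *
  omega

theorem numComp_deleteEdges_of_mem (h : u ∈ S ∨ v ∈ S) :
    numComp (G.deleteEdges {s(u, v)}) S = numComp G S := by
  suffices (G.deleteEdges {s(u, v)}).induce Sᶜ = G.induce Sᶜ by rw [numComp, numComp, this]
  ext ⟨a, ha⟩ ⟨b, hb⟩
  simp only [comap_adj, Function.Embedding.coe_subtype, deleteEdges_adj, Set.mem_singleton_iff,
    Sym2.eq_iff, and_iff_left_iff_imp]
  rintro - (⟨rfl, rfl⟩ | ⟨rfl, rfl⟩) <;> tauto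

theorem isCutset_insert_of_bridge [Finite V] {w : V} (hu : u ∉ S) (hv : v ∉ S) (hwS : w ∉ S)
    (hwu : w ≠ u) (huv : u ≠ v)
    (hw : ((G.deleteEdges {s(u, v)}).induce Sᶜ).Reachable ⟨w, hwS⟩ ⟨u, hu⟩)
    (hsep : ¬ ((G.deleteEdges {s(u, v)}).induce Sᶜ).Reachable ⟨u, hu⟩ ⟨v, hv⟩) :
    IsCutset G (insert u S) := by
  have hw' : w ∉ insert u S := by simp [hwu, hwS]
  have hv' : v ∉ insert u S := by simp [huv.symm, hv]
  refine isCutset_iff_exists_not_reachable.mpr ⟨⟨w, hw'⟩, ⟨v, hv'⟩, fun h => hsep ?_⟩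
  exact hw.symm.trans (h.deleteEdges_induce_of_subset (Set.subset_insert u S) (.inl (.inl rfl)))

theorem exists_isCutset_card_le_numComp_of_bridge [Finite V] (hcard : 4 ≤ Nat.card V)
    (huv : u ≠ v) (hu : u ∉ S) (hv : v ∉ S) (hS : ¬ IsCutset G S) (hS1 : S.ncard ≤ 1)
    (hsep : ¬ ((G.deleteEdges {s(u, v)}).induce Sᶜ).Reachable ⟨u, hu⟩ ⟨v, hv⟩) :
    ∃ T, IsCutset G T ∧ Nat.card T ≤ numComp G T := by
  have small_cutset (a : V) (hT : IsCutset G (insert a S)) :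
      ∃ T, IsCutset G T ∧ Nat.card T ≤ numComp G T := by
    refine ⟨_, hT, ?_⟩
    have := Set.ncard_insert_le a S
    rw [IsCutset] at hT
    rw [Nat.card_coe_set_eq]
    omega
  obtain ⟨w, -, hw⟩ : ∃ w ∈ Set.univ, w ∉ insert u (insert v S) := by
    refine Set.exists_mem_notMem_of_ncard_lt_ncard ?_ (Set.toFinite _)
    have := Set.ncard_insert_le u (insert v S)
    have := Set.ncard_insert_le v S
    rw [Set.ncard_univ]
    omega
  simp only [Set.mem_insert_iff, not_or] at hw
  obtain ⟨hwu, hwv, hwS⟩ := hw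
  have hconn : (G.induce Sᶜ).Reachable ⟨w, hwS⟩ ⟨u, hu⟩ := by
    by_contra h
    exact hS (isCutset_iff_exists_not_reachable.mpr ⟨_, _, h⟩)
  have hreach := hconn.deleteEdges_or (u := ⟨u, hu⟩) (v := ⟨v, hv⟩)
  rw [← induce_compl_deleteEdges] at hreach
  rcases hreach with h | ⟨h, -⟩ | ⟨h, -⟩
  · exact small_cutset u (isCutset_insert_of_bridge hu hv hwS hwu huv h hsep)
  · exact small_cutset u (isCutset_insert_of_bridge hu hv hwS hwu huv h hsep)
  · refine small_cutset v (isCutset_insert_of_bridge hv hu hwS hwv huv.symm ?_ ?_)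
    · rwa [Sym2.eq_swap]
    · rw [Sym2.eq_swap]
      exact fun h => hsep h.symm

theorem exists_isCutset_card_le_numComp [Finite V] (hG : IsTTough 1 G) (huv : G.Adj u v)
    (hcrit : ¬ IsTTough 1 (G.deleteEdges {s(u, v)})) (hcard : 4 ≤ Nat.card V) :
    ∃ T, IsCutset G T ∧ Nat.card T ≤ numComp G T := by
  simp only [IsTTough, not_forall, one_mul, not_le, exists_prop] at hcrit
  obtain ⟨S, hScut, hlt⟩ := hcrit
  replace hlt : Nat.card S < numComp (G.deleteEdges {s(u, v)}) S := by exact_mod_cast hlt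
  have numComp_ne : numComp (G.deleteEdges {s(u, v)}) S ≠ numComp G S := fun heq =>
    (hG.numComp_le (show 1 < numComp G S from heq ▸ hScut)).not_gt (heq ▸ hlt)
  obtain ⟨hu, hv⟩ : u ∉ S ∧ v ∉ S := by
    rw [← not_or]
    exact fun h => numComp_ne (numComp_deleteEdges_of_mem h)
  have hcomm := induce_compl_deleteEdges (G := G) hu hv
  have hsep : ¬ ((G.deleteEdges {s(u, v)}).induce Sᶜ).Reachable ⟨u, hu⟩ ⟨v, hv⟩ := by
    rw [hcomm]
    intro h
    apply numComp_ne
    rw [numComp, numComp, hcomm, card_connectedComponent_deleteEdges_of_reachable h]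
  have hle : numComp (G.deleteEdges {s(u, v)}) S ≤ numComp G S + 1 := by
    rw [numComp, numComp, hcomm]
    exact card_connectedComponent_deleteEdges_le _ _ _
  by_cases hS : IsCutset G S
  · exact ⟨S, hS, by omega⟩
  refine exists_isCutset_card_le_numComp_of_bridge hcard huv.ne hu hv hS ?_ hsep
  rw [IsCutset] at hS
  rw [← Nat.card_coe_set_eq]
  omega

end Toughness

theorem stmt5 {V : Type*} [Fintype V] (G : SimpleGraph V)
    (hG : AlmostMinOneTough G) (hcard : 4 ≤ Fintype.card V) :
    MinTough 1 G := by
  obtain ⟨htough, hcrit⟩ := hG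
  have : Nontrivial V := Fintype.one_lt_card_iff_nontrivial.mp (by omega)
  obtain ⟨u, v, huv⟩ := htough.exists_adj
  obtain ⟨T, hT, hle⟩ := exists_isCutset_card_le_numComp htough huv (hcrit _ huv)
    (by rwa [Nat.card_eq_fintype_card])
  exact ⟨⟨htough, fun t ht => ht.le_one_of_card_le_numComp hT hle⟩, hcrit⟩
end

section
/- Let a, b be positive integers with a/b ≤ 1/2, and let H be the graph on vertex sets V = {v₁,…,v_a}, U = {u₁,…,u_{b−a}}, W = {w₁,…,w_a}, where V forms a clique, every vertex of V is adjacent to every vertex of U, and v_i is adjacent to w_i for each i. Then the toughness of H equals a/b. -/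
open SimpleGraph

/-- The graph `H_{a/b}`: a clique `V` of size `a`, an independent set `U` of
size `b−a` completely joined to `V`, and a pendant vertex `w_i` attached to
each `v_i ∈ V`. -/
def Hab (a b : ℕ) : SimpleGraph (Fin a ⊕ (Fin (b - a) ⊕ Fin a)) :=
  SimpleGraph.fromRel (fun x y =>
    match x, y with
    | Sum.inl _, Sum.inl _ => True
    | Sum.inl _, Sum.inr (Sum.inl _) => True
    | Sum.inl i, Sum.inr (Sum.inr j) => (i : ℕ) = (j : ℕ)
    | _, _ => False)

/-! Deleting the clique `V` (`a` vertices) leaves the `b` vertices of `U ∪ W` isolated, so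
`τ(H) ≤ a/b`. Conversely, let `S` be a cutset. If some `v_i` survives, every surviving vertex lies
in its component except the pendants `w_j` with `v_j ∈ S`, so `2 ≤ ω(H - S) ≤ |S| + 1 ≤ 2|S|`,
and `a·ω ≤ b|S|` since `2a ≤ b`. If `V ⊆ S`, then `ω(H - S) ≤ a + b - |S|` and `a ≤ |S|`, which
again gives `a·ω ≤ b|S|`. -/

namespace SimpleGraph

variable {V : Type*} (G : SimpleGraph V)

lemma card_connectedComponent_le_card [Finite V] :
    Nat.card G.ConnectedComponent ≤ Nat.card V :=
  Nat.card_le_card_of_surjective _ fun c => c.exists_rep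

lemma card_connectedComponent_eq_card_of_forall_not_adj (h : ∀ x y, ¬ G.Adj x y) :
    Nat.card G.ConnectedComponent = Nat.card V := by
  obtain rfl : G = ⊥ := by ext x y; simp [h x y]
  refine (Nat.card_eq_of_bijective _ ⟨fun x y hxy => ?_, fun c => c.exists_rep⟩).symm
  exact reachable_bot.mp (ConnectedComponent.eq.mp hxy)

lemma card_connectedComponent_le_card_add_one {ι : Type*} [Finite ι] (r : V) (g : ι → V)
    (h : ∀ x, G.Reachable r x ∨ x ∈ Set.range g) :
    Nat.card G.ConnectedComponent ≤ Nat.card ι + 1 := by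
  have hsurj : Function.Surjective
      (Option.elim · (G.connectedComponentMk r) (G.connectedComponentMk ∘ g)) := by
    rintro ⟨x⟩
    rcases h x with hx | ⟨i, rfl⟩
    · exact ⟨none, ConnectedComponent.sound hx⟩
    · exact ⟨some i, rfl⟩
  simpa using Nat.card_le_card_of_surjective _ hsurj

end SimpleGraph

lemma toughnessEq_of_isCutset {V : Type*} {G : SimpleGraph V} {t : ℚ} (hG : IsTTough t G)
    {S : Set V} (hS : IsCutset G S) (hSt : (Nat.card S : ℚ) = t * numComp G S) :
    ToughnessEq G t := by
  refine ⟨hG, fun t' ht' => ?_⟩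
  have hpos : (0 : ℚ) < numComp G S := by exact_mod_cast (Nat.zero_lt_one.trans hS)
  exact le_of_mul_le_mul_right (hSt ▸ ht' S hS) hpos

namespace Hab

variable {a b : ℕ}

lemma adj_inl_inl {i j : Fin a} (h : i ≠ j) : (Hab a b).Adj (.inl i) (.inl j) :=
  ⟨by simp [h], Or.inl trivial⟩

lemma adj_inl_inr_inl (i : Fin a) (u : Fin (b - a)) : (Hab a b).Adj (.inl i) (.inr (.inl u)) :=
  ⟨by simp, Or.inl trivial⟩

lemma adj_inl_inr_inr (i : Fin a) : (Hab a b).Adj (.inl i) (.inr (.inr i)) :=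
  ⟨by simp, Or.inl rfl⟩

lemma not_adj_inr_inr (x y : Fin (b - a) ⊕ Fin a) : ¬ (Hab a b).Adj (.inr x) (.inr y) := by
  rintro ⟨-, h | h⟩ <;> rcases x with u | w <;> rcases y with u' | w' <;> exact h

lemma card_vertices (hab : a ≤ b) : Nat.card (Fin a ⊕ (Fin (b - a) ⊕ Fin a)) = a + b := by
  simp only [Nat.card_sum, Nat.card_fin]
  omega

lemma numComp_le_card_add_one {S : Set (Fin a ⊕ (Fin (b - a) ⊕ Fin a))} {i₀ : Fin a}
    (hi₀ : .inl i₀ ∉ S) : numComp (Hab a b) S ≤ Nat.card S + 1 := by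
  let G := (Hab a b).induce Sᶜ
  let ι := {j : Fin a // .inl j ∈ S ∧ .inr (.inr j) ∉ S}
  have hv : ∀ i (hi : Sum.inl i ∉ S), G.Reachable ⟨.inl i₀, hi₀⟩ ⟨.inl i, hi⟩ := by
    intro i hi
    by_cases h : i₀ = i
    · subst h; rfl
    · exact (induce_adj.mpr (adj_inl_inl h)).reachable
  have hreach : ∀ x : (Sᶜ : Set _), G.Reachable ⟨.inl i₀, hi₀⟩ x ∨
      x ∈ Set.range (fun j : ι => ⟨.inr (.inr j.1), j.2.2⟩) := by
    rintro ⟨i | u | j, hx⟩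
    · exact .inl (hv i hx)
    · exact .inl (induce_adj.mpr (adj_inl_inr_inl i₀ u)).reachable
    · by_cases hj : .inl j ∈ S
      · exact .inr ⟨⟨j, hj, hx⟩, rfl⟩
      · exact .inl ((hv j hj).trans (induce_adj.mpr (adj_inl_inr_inr j)).reachable)
  have hι : Nat.card ι ≤ Nat.card S :=
    Nat.card_le_card_of_injective (fun j => ⟨.inl j.1, j.2.1⟩) fun j k h =>
      Subtype.ext (by simpa using h)
  exact (G.card_connectedComponent_le_card_add_one _ _ hreach).trans (by omega)

lemma mul_numComp_le (h2ab : 2 * a ≤ b) {S : Set (Fin a ⊕ (Fin (b - a) ⊕ Fin a))}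
    (hS : IsCutset (Hab a b) S) : a * numComp (Hab a b) S ≤ b * Nat.card S := by
  by_cases hV : ∃ i, .inl i ∉ S
  · obtain ⟨i₀, hi₀⟩ := hV
    have hω := numComp_le_card_add_one (b := b) hi₀
    have hcut : 1 < numComp (Hab a b) S := hS
    nlinarith
  · push Not at hV
    have hω : numComp (Hab a b) S ≤ Nat.card (Sᶜ : Set _) :=
      SimpleGraph.card_connectedComponent_le_card _
    have hsum : Nat.card S + Nat.card (Sᶜ : Set _) = a + b := by
      rw [Nat.card_coe_set_eq, Nat.card_coe_set_eq, Set.ncard_add_ncard_compl,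
        card_vertices (by omega)]
    have haS : a ≤ Nat.card S := by
      simpa using Nat.card_le_card_of_injective (fun i => (⟨.inl i, hV i⟩ : S))
        fun i j h => by simpa using h
    nlinarith

lemma isTTough (hb : 0 < b) (h2ab : 2 * a ≤ b) : IsTTough ((a : ℚ) / b) (Hab a b) := by
  intro S hS
  rw [div_mul_eq_mul_div, div_le_iff₀ (by exact_mod_cast hb), mul_comm (Nat.card S : ℚ)]
  exact_mod_cast mul_numComp_le h2ab hS

lemma numComp_range_inl (hab : a ≤ b) : numComp (Hab a b) (Set.range .inl) = b := by
  rw [numComp, SimpleGraph.card_connectedComponent_eq_card_of_forall_not_adj, Set.compl_range_inl,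
    Nat.card_range_of_injective Sum.inr_injective]
  · simp only [Nat.card_sum, Nat.card_fin]
    omega
  · rintro ⟨x, hx⟩ ⟨y, hy⟩
    rw [Set.compl_range_inl] at hx hy
    obtain ⟨x, rfl⟩ := hx
    obtain ⟨y, rfl⟩ := hy
    exact not_adj_inr_inr x y

end Hab

theorem stmt6 (a b : ℕ) (ha : 0 < a) (hb : 0 < b)
    (hab : (a : ℚ) / b ≤ 1 / 2) :
    ToughnessEq (Hab a b) ((a : ℚ) / b) := by
  have hbQ : (0 : ℚ) < b := by exact_mod_cast hb
  have h2ab : 2 * a ≤ b := by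
    rw [div_le_div_iff₀ hbQ two_pos] at hab
    exact_mod_cast (by linarith : (2 * a : ℚ) ≤ b)
  have hω : numComp (Hab a b) (Set.range .inl) = b := Hab.numComp_range_inl (by omega)
  refine toughnessEq_of_isCutset (Hab.isTTough hb h2ab) (S := Set.range .inl)
    (show 1 < _ by omega) ?_
  rw [hω, Nat.card_range_of_injective Sum.inl_injective, Nat.card_fin, div_mul_cancel₀ _ hbQ.ne']
end

section
/- Let G be an α-critical graph, let v be a vertex of G, and let G′ be obtained from G by replacing v with a clique K (each vertex of K adjacent to all other vertices of K and to all neighbors of v in G). Then G′ is α-critical. -/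
open SimpleGraph

/-- Replace the vertex `v` of `G` by a clique on `k` vertices, each adjacent
to all the other clique vertices and to all neighbors of `v` in `G`. -/
def blowup {V : Type*} (G : SimpleGraph V) (v : V) (k : ℕ) :
    SimpleGraph ({x : V // x ≠ v} ⊕ Fin k) :=
  SimpleGraph.fromRel (fun p q =>
    match p, q with
    | Sum.inl x, Sum.inl y => G.Adj x.1 y.1
    | Sum.inl x, Sum.inr _ => G.Adj x.1 v
    | Sum.inr _, Sum.inr _ => True
    | _, _ => False)

/-!
Sending `v` to a clique vertex `i` and every other vertex to itself embeds `G` as an induced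
subgraph of the blowup `G'`; collapsing the clique back to `v` maps independent sets of `G'`
injectively to independent sets of `G`, so `α(G') ≤ α(G)`. An edge `e` of `G'` outside the clique
is the image of an edge `ab` of `G` under one of these embeddings, and then `G - ab`, whose
independence number exceeds `α(G)`, embeds in `G' - e`. For a clique edge `ij`, criticality puts
`v` into some maximum independent set `S` of `G`, and the image of `S` under the embedding through
`i`, together with `j`, is independent in `G' - ij`.
-/

section

variable {V W : Type*}

section Embedding

variable {G : SimpleGraph V} {H : SimpleGraph W}

def SimpleGraph.Embedding.deleteEdge (f : G ↪g H) (a b : V) :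
    G.deleteEdges {s(a, b)} ↪g H.deleteEdges {s(f a, f b)} where
  toEmbedding := f.toEmbedding
  map_rel_iff' := by simp [f.injective.eq_iff]

lemma SimpleGraph.IsIndepSet.image (f : G ↪g H) {s : Set V} (hs : G.IsIndepSet s) :
    H.IsIndepSet (f '' s) := by
  rintro _ ⟨a, ha, rfl⟩ _ ⟨b, hb, rfl⟩ hne hadj
  exact hs ha hb (ne_of_apply_ne f hne) (f.map_adj_iff.mp hadj)

lemma SimpleGraph.IsIndepSet.diff_singleton_of_deleteEdges {s : Set V} {a b : V}
    (hs : (G.deleteEdges {s(a, b)}).IsIndepSet s) : G.IsIndepSet (s \ {b}) := by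
  rintro x ⟨hx, hxb⟩ y ⟨hy, hyb⟩ hxy hadj
  refine hs hx hy hxy ((deleteEdges_adj ..).mpr ⟨hadj, ?_⟩)
  simp only [Set.mem_singleton_iff, Sym2.eq_iff] at hxb hyb ⊢
  tauto

end Embedding

section IndepNum

variable [Fintype V] {G : SimpleGraph V} {s : Set V}

lemma bddAbove_natCard_isIndepSet (G : SimpleGraph V) :
    BddAbove {n | ∃ s : Set V, G.IsIndepSet s ∧ Nat.card s = n} := by
  refine ⟨Nat.card V, ?_⟩
  rintro _ ⟨s, -, rfl⟩
  exact Finite.card_subtype_le s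

lemma SimpleGraph.IsIndepSet.ncard_le_indepNum (hs : G.IsIndepSet s) :
    s.ncard ≤ _root_.indepNum G :=
  le_csSup (bddAbove_natCard_isIndepSet G) ⟨s, hs, Nat.card_coe_set_eq s⟩

lemma exists_isIndepSet_ncard_eq_indepNum (G : SimpleGraph V) :
    ∃ s : Set V, G.IsIndepSet s ∧ s.ncard = _root_.indepNum G := by
  have hne : {n | ∃ s : Set V, G.IsIndepSet s ∧ Nat.card s = n}.Nonempty :=
    ⟨0, ∅, Set.pairwise_empty _, by simp⟩
  obtain ⟨s, hs, hcard⟩ := Nat.sSup_mem hne (bddAbove_natCard_isIndepSet G)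
  exact ⟨s, hs, (Nat.card_coe_set_eq s).symm.trans hcard⟩

lemma SimpleGraph.Embedding.indepNum_le [Fintype W] {H : SimpleGraph W} (f : G ↪g H) :
    _root_.indepNum G ≤ _root_.indepNum H := by
  obtain ⟨s, hs, hcard⟩ := exists_isIndepSet_ncard_eq_indepNum G
  rw [← hcard, ← Set.ncard_image_of_injective s f.injective]
  exact (hs.image f).ncard_le_indepNum

lemma SimpleGraph.IsIndepSet.mem_of_deleteEdges {a b : V}
    (hs : (G.deleteEdges {s(a, b)}).IsIndepSet s) (hlt : _root_.indepNum G < s.ncard) : b ∈ s := by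
  by_contra hbs
  have := hs.diff_singleton_of_deleteEdges.ncard_le_indepNum
  rw [Set.sdiff_singleton_eq_self hbs] at this
  omega

lemma AlphaCritical.exists_isIndepSet_mem (hG : AlphaCritical G) (v : V) :
    ∃ s : Set V, G.IsIndepSet s ∧ s.ncard = _root_.indepNum G ∧ v ∈ s := by
  by_cases hv : ∃ u, G.Adj v u
  · obtain ⟨u, hvu⟩ := hv
    obtain ⟨s, hs, hcard⟩ := exists_isIndepSet_ncard_eq_indepNum (G.deleteEdges {s(v, u)})
    have hlt : _root_.indepNum G < s.ncard := hcard ▸ hG _ hvu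
    have hs' : (G.deleteEdges {s(u, v)}).IsIndepSet s := by rwa [Sym2.eq_swap]
    have hindep := hs.diff_singleton_of_deleteEdges
    refine ⟨s \ {u}, hindep, ?_, hs'.mem_of_deleteEdges hlt, hvu.ne⟩
    have := hindep.ncard_le_indepNum
    rw [Set.ncard_sdiff_singleton_of_mem (hs.mem_of_deleteEdges hlt)] at this ⊢
    omega
  · push Not at hv
    obtain ⟨s, hs, hcard⟩ := exists_isIndepSet_ncard_eq_indepNum G
    refine ⟨s, hs, hcard, by_contra fun hvs => ?_⟩
    have hins : G.IsIndepSet (insert v s) := hs.insert fun u _ _ => ⟨hv u, fun h => hv u h.symm⟩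
    have := hins.ncard_le_indepNum
    rw [Set.ncard_insert_of_notMem hvs] at this
    omega

end IndepNum

section Blowup

variable {G : SimpleGraph V} {v : V} {k : ℕ}

@[simp] lemma blowup_adj_inl_inl {x y : {x : V // x ≠ v}} :
    (blowup G v k).Adj (.inl x) (.inl y) ↔ G.Adj x y := by
  simp only [blowup, fromRel_adj, ne_eq, Sum.inl.injEq, adj_comm G y, or_self,
    and_iff_right_iff_imp]
  exact fun h => ne_of_apply_ne Subtype.val h.ne

@[simp] lemma blowup_adj_inl_inr {x : {x : V // x ≠ v}} {i : Fin k} :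
    (blowup G v k).Adj (.inl x) (.inr i) ↔ G.Adj x v := by
  simp [blowup]

@[simp] lemma blowup_adj_inr_inl {x : {x : V // x ≠ v}} {i : Fin k} :
    (blowup G v k).Adj (.inr i) (.inl x) ↔ G.Adj x v := by
  simp [blowup]

@[simp] lemma blowup_adj_inr_inr {i j : Fin k} :
    (blowup G v k).Adj (.inr i) (.inr j) ↔ i ≠ j := by
  simp [blowup]

def blowupCollapse : {x : V // x ≠ v} ⊕ Fin k → V := Sum.elim Subtype.val fun _ => v

lemma blowup_adj_of_adj_collapse {p q : {x : V // x ≠ v} ⊕ Fin k}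
    (h : G.Adj (blowupCollapse p) (blowupCollapse q)) : (blowup G v k).Adj p q := by
  cases p <;> cases q <;> simp_all [blowupCollapse, adj_comm G v]

variable [DecidableEq V]

variable (G v) in
def blowupEmbedding (i : Fin k) : G ↪g blowup G v k where
  toFun a := if h : a = v then .inr i else .inl ⟨a, h⟩
  inj' a b hab := by
    by_cases ha : a = v <;> by_cases hb : b = v <;> simp_all
  map_rel_iff' {a b} := by
    by_cases ha : a = v <;> by_cases hb : b = v <;> simp_all [adj_comm G v]

@[simp] lemma blowupEmbedding_self (i : Fin k) : blowupEmbedding G v i v = .inr i := dif_pos rfl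

@[simp] lemma blowupEmbedding_of_ne (i : Fin k) {a : V} (ha : a ≠ v) :
    blowupEmbedding G v i a = .inl ⟨a, ha⟩ := dif_neg ha

lemma blowup_adj_cases (hk : 0 < k)
    {p q : {x : V // x ≠ v} ⊕ Fin k} (h : (blowup G v k).Adj p q) :
    (∃ (i : Fin k) (a b : V), G.Adj a b ∧
        blowupEmbedding G v i a = p ∧ blowupEmbedding G v i b = q) ∨
      ∃ i j : Fin k, i ≠ j ∧ p = .inr i ∧ q = .inr j := by
  rcases p with x | i <;> rcases q with y | j
  · exact .inl ⟨⟨0, hk⟩, x, y, by simpa using h, by simp [x.2], by simp [y.2]⟩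
  · exact .inl ⟨j, x, v, by simpa using h, by simp [x.2], by simp⟩
  · exact .inl ⟨i, v, y, by simpa [adj_comm G v] using h, by simp, by simp [y.2]⟩
  · exact .inr ⟨i, j, by simpa using h, rfl, rfl⟩

variable [Fintype V]

lemma indepNum_blowup_le : _root_.indepNum (blowup G v k) ≤ _root_.indepNum G := by
  obtain ⟨t, ht, hcard⟩ := exists_isIndepSet_ncard_eq_indepNum (blowup G v k)
  have hinj : Set.InjOn blowupCollapse t := by
    intro p hp q hq hpq
    rcases p with x | i <;> rcases q with y | j
    · exact congrArg _ (Subtype.ext hpq)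
    · exact absurd hpq x.2
    · exact absurd hpq.symm y.2
    · by_contra hne
      exact ht hp hq hne (blowup_adj_inr_inr.mpr fun hij => hne (hij ▸ rfl))
  have himage : G.IsIndepSet (blowupCollapse '' t) := by
    rintro _ ⟨p, hp, rfl⟩ _ ⟨q, hq, rfl⟩ hne hadj
    exact ht hp hq (ne_of_apply_ne _ hne) (blowup_adj_of_adj_collapse hadj)
  rw [← hcard, ← hinj.ncard_image]
  exact himage.ncard_le_indepNum

lemma AlphaCritical.indepNum_lt_blowup_deleteEdges_inr (hG : AlphaCritical G) {i j : Fin k}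
    (hij : i ≠ j) :
    _root_.indepNum G < _root_.indepNum ((blowup G v k).deleteEdges {s(.inr i, .inr j)}) := by
  obtain ⟨s, hs, hcard, hvs⟩ := hG.exists_isIndepSet_mem v
  set f := blowupEmbedding G v i
  have hj : .inr j ∉ f '' s := by
    rintro ⟨a, -, ha⟩
    by_cases hav : a = v
    · simp [f, hav, hij] at ha
    · simp [f, hav] at ha
  have hindep : ((blowup G v k).deleteEdges {s(.inr i, .inr j)}).IsIndepSet
      (insert (.inr j) (f '' s)) := by
    refine Set.Pairwise.insert ((hs.image f).mono' fun p q h hadj => h (deleteEdges_le _ hadj)) ?_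
    rintro _ ⟨a, ha, rfl⟩ -
    by_cases hav : a = v
    · subst hav
      simp [f, Sym2.eq_swap]
    · have := hs ha hvs hav
      simp_all [f]
  have := hindep.ncard_le_indepNum
  rw [Set.ncard_insert_of_notMem hj, Set.ncard_image_of_injective s f.injective] at this
  omega

end Blowup

end

theorem stmt9 {V : Type*} [Fintype V] [DecidableEq V]
    (G : SimpleGraph V) (v : V) (k : ℕ) (hk : 0 < k)
    (hcrit : AlphaCritical G) :
    AlphaCritical (blowup G v k) := by
  intro e he
  induction e using Sym2.ind with | _ p q => ?_
  rcases blowup_adj_cases hk he with ⟨i, a, b, hab, rfl, rfl⟩ | ⟨i, j, hij, rfl, rfl⟩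
  · calc _root_.indepNum (blowup G v k)
        ≤ _root_.indepNum G := indepNum_blowup_le
      _ < _root_.indepNum (G.deleteEdges {s(a, b)}) := hcrit _ hab
      _ ≤ _ := ((blowupEmbedding G v i).deleteEdge a b).indepNum_le
  · exact indepNum_blowup_le.trans_lt (hcrit.indepNum_lt_blowup_deleteEdges_inr hij)
end
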